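/- The partial information decomposition bounds sum to the total mutual information: if there exists q* ∈ Δ_p attaining the minimum of I_q(Y:(X₁,X₂)) over q ∈ Δ_p, then S̃I(Y:X₁;X₂) + ŨI(Y:X₁\X₂) + ŨI(Y:X₂\X₁) + C̃I(Y:X₁;X₂) = I_p(Y:(X₁,X₂)). -/
import Mathlib


open scoped BigOperators

noncomputable section

variable {X₁ X₂ Y : Type*} [Fintype X₁] [Fintype X₂] [Fintype Y]

/-- `p` is a probability mass function on a finite type. -/
def IsPMF {Ω : Type*} [Fintype Ω] (p : Ω → ℝ) : Prop :=
  (∀ ω, 0 ≤ p ω) ∧ ∑ ω, p ω = 1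

/-- Marginal of `q` on `Y`. -/
def margY (q : X₁ × X₂ × Y → ℝ) : Y → ℝ :=
  fun y => ∑ x₁, ∑ x₂, q (x₁, x₂, y)

/-- Marginal of `q` on `X₁`. -/
def margX1 (q : X₁ × X₂ × Y → ℝ) : X₁ → ℝ :=
  fun x₁ => ∑ x₂, ∑ y, q (x₁, x₂, y)

/-- Marginal of `q` on `X₂`. -/
def margX2 (q : X₁ × X₂ × Y → ℝ) : X₂ → ℝ :=
  fun x₂ => ∑ x₁, ∑ y, q (x₁, x₂, y)

/-- Marginal of `q` on `(X₁, X₂)`. -/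
def margX1X2 (q : X₁ × X₂ × Y → ℝ) : X₁ × X₂ → ℝ :=
  fun s => ∑ y, q (s.1, s.2, y)

/-- Marginal of `q` on `(X₁, Y)`. -/
def margX1Y (q : X₁ × X₂ × Y → ℝ) : X₁ × Y → ℝ :=
  fun s => ∑ x₂, q (s.1, x₂, s.2)

/-- Marginal of `q` on `(X₂, Y)`. -/
def margX2Y (q : X₁ × X₂ × Y → ℝ) : X₂ × Y → ℝ :=
  fun s => ∑ x₁, q (x₁, s.1, s.2)

/-- Mutual information `I_q(Y : X₁)`.  (Terms with zero numerator probability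
contribute `0`, since `0 * log _ = 0` and `Real.log 0 = 0`.) -/
def miX1 (q : X₁ × X₂ × Y → ℝ) : ℝ :=
  ∑ x₁, ∑ y,
    margX1Y q (x₁, y) * Real.log (margX1Y q (x₁, y) / (margX1 q x₁ * margY q y))

/-- Mutual information `I_q(Y : X₂)`. -/
def miX2 (q : X₁ × X₂ × Y → ℝ) : ℝ :=
  ∑ x₂, ∑ y,
    margX2Y q (x₂, y) * Real.log (margX2Y q (x₂, y) / (margX2 q x₂ * margY q y))

/-- Joint mutual information `I_q(Y : (X₁, X₂))`. -/
def miJoint (q : X₁ × X₂ × Y → ℝ) : ℝ :=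
  ∑ x₁, ∑ x₂, ∑ y,
    q (x₁, x₂, y) * Real.log (q (x₁, x₂, y) / (margX1X2 q (x₁, x₂) * margY q y))

/-- Conditional mutual information `I_q(Y : X₂ | X₁)`. -/
def cmiX2X1 (q : X₁ × X₂ × Y → ℝ) : ℝ :=
  ∑ x₁, ∑ x₂, ∑ y,
    q (x₁, x₂, y) *
      Real.log (margX1 q x₁ * q (x₁, x₂, y) /
        (margX1X2 q (x₁, x₂) * margX1Y q (x₁, y)))

/-- Conditional mutual information `I_q(Y : X₁ | X₂)`. -/
def cmiX1X2 (q : X₁ × X₂ × Y → ℝ) : ℝ :=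
  ∑ x₁, ∑ x₂, ∑ y,
    q (x₁, x₂, y) *
      Real.log (margX2 q x₂ * q (x₁, x₂, y) /
        (margX1X2 q (x₁, x₂) * margX2Y q (x₂, y)))

/-- Co-information `CoI_q(Y; X₁; X₂) = I_q(Y:X₁) + I_q(Y:X₂) − I_q(Y:(X₁,X₂))`. -/
def coI (q : X₁ × X₂ × Y → ℝ) : ℝ := miX1 q + miX2 q - miJoint q

/-- Shannon entropy of a pmf on a finite type (with `0 · log 0 = 0`). -/
def entropy {Ω : Type*} [Fintype Ω] (r : Ω → ℝ) : ℝ :=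
  -∑ s, r s * Real.log (r s)

/-- `Δ_p`: the set of pmfs whose pairwise marginals with `Y` match those of `p`. -/
def Delta (p : X₁ × X₂ × Y → ℝ) : Set (X₁ × X₂ × Y → ℝ) :=
  {q | IsPMF q ∧ margX1Y q = margX1Y p ∧ margX2Y q = margX2Y p}

lemma margX1_eq_sum_margX1Y (q : X₁ × X₂ × Y → ℝ) (x₁ : X₁) :
    margX1 q x₁ = ∑ y, margX1Y q (x₁, y) := by
  simp only [margX1, margX1Y]; exact Finset.sum_comm

lemma margX2_eq_sum_margX2Y (q : X₁ × X₂ × Y → ℝ) (x₂ : X₂) :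
    margX2 q x₂ = ∑ y, margX2Y q (x₂, y) := by
  simp only [margX2, margX2Y]; exact Finset.sum_comm

lemma margY_eq_sum_margX1Y (q : X₁ × X₂ × Y → ℝ) (y : Y) :
    margY q y = ∑ x₁, margX1Y q (x₁, y) := rfl

lemma margY_eq_sum_margX2Y (q : X₁ × X₂ × Y → ℝ) (y : Y) :
    margY q y = ∑ x₂, margX2Y q (x₂, y) := by
  simp only [margY, margX2Y]; exact Finset.sum_comm

lemma miX1_congr {q p : X₁ × X₂ × Y → ℝ} (h : margX1Y q = margX1Y p) :
    miX1 q = miX1 p := by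
  have hX1 : ∀ x₁, margX1 q x₁ = margX1 p x₁ := fun x₁ => by
    rw [margX1_eq_sum_margX1Y, margX1_eq_sum_margX1Y, h]
  have hY : ∀ y, margY q y = margY p y := fun y => by
    rw [margY_eq_sum_margX1Y, margY_eq_sum_margX1Y, h]
  unfold miX1
  refine Finset.sum_congr rfl fun x₁ _ => Finset.sum_congr rfl fun y _ => ?_
  rw [h, hX1, hY]

lemma miX2_congr {q p : X₁ × X₂ × Y → ℝ} (h : margX2Y q = margX2Y p) :
    miX2 q = miX2 p := by
  have hX2 : ∀ x₂, margX2 q x₂ = margX2 p x₂ := fun x₂ => by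
    rw [margX2_eq_sum_margX2Y, margX2_eq_sum_margX2Y, h]
  have hY : ∀ y, margY q y = margY p y := fun y => by
    rw [margY_eq_sum_margX2Y, margY_eq_sum_margX2Y, h]
  unfold miX2
  refine Finset.sum_congr rfl fun x₂ _ => Finset.sum_congr rfl fun y _ => ?_
  rw [h, hX2, hY]

lemma chain_rule_X1X2 (q : X₁ × X₂ × Y → ℝ) (hq : ∀ ω, 0 ≤ q ω) :
    miJoint q = miX2 q + cmiX1X2 q := by
  have key : ∀ x₁ x₂ y,
      q (x₁, x₂, y) * Real.log (q (x₁, x₂, y) / (margX1X2 q (x₁, x₂) * margY q y))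
      = q (x₁, x₂, y) * Real.log (margX2 q x₂ * q (x₁, x₂, y) /
          (margX1X2 q (x₁, x₂) * margX2Y q (x₂, y)))
        + q (x₁, x₂, y) * Real.log (margX2Y q (x₂, y) / (margX2 q x₂ * margY q y)) := by
    intro x₁ x₂ y
    rcases eq_or_lt_of_le (hq (x₁, x₂, y)) with h0 | hpos
    · simp [← h0]
    · have h12 : 0 < margX1X2 q (x₁, x₂) :=
        lt_of_lt_of_le hpos (Finset.single_le_sum (fun i _ => hq (x₁, x₂, i)) (Finset.mem_univ y))
      have h2y : 0 < margX2Y q (x₂, y) :=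
        lt_of_lt_of_le hpos (Finset.single_le_sum (fun i _ => hq (i, x₂, y)) (Finset.mem_univ x₁))
      have hx2 : 0 < margX2 q x₂ := by
        have h1 : q (x₁, x₂, y) ≤ ∑ y, q (x₁, x₂, y) :=
          Finset.single_le_sum (fun i _ => hq (x₁, x₂, i)) (Finset.mem_univ y)
        have h2 : (∑ y, q (x₁, x₂, y)) ≤ ∑ x₁, ∑ y, q (x₁, x₂, y) :=
          Finset.single_le_sum (fun i _ => Finset.sum_nonneg fun j _ => hq (i, x₂, j))
            (Finset.mem_univ x₁)
        exact lt_of_lt_of_le hpos (h1.trans h2)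
      have hy : 0 < margY q y := by
        have h1 : q (x₁, x₂, y) ≤ ∑ x₂, q (x₁, x₂, y) :=
          Finset.single_le_sum (fun i _ => hq (x₁, i, y)) (Finset.mem_univ x₂)
        have h2 : (∑ x₂, q (x₁, x₂, y)) ≤ ∑ x₁, ∑ x₂, q (x₁, x₂, y) :=
          Finset.single_le_sum (fun i _ => Finset.sum_nonneg fun j _ => hq (i, j, y))
            (Finset.mem_univ x₁)
        exact lt_of_lt_of_le hpos (h1.trans h2)
      rw [← mul_add, ← Real.log_mul
        (div_pos (mul_pos hx2 hpos) (mul_pos h12 h2y)).ne'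
        (div_pos h2y (mul_pos hx2 hy)).ne']
      congr 2
      field_simp
  unfold miJoint
  have : (∑ x₁, ∑ x₂, ∑ y,
      q (x₁, x₂, y) * Real.log (q (x₁, x₂, y) / (margX1X2 q (x₁, x₂) * margY q y)))
      = cmiX1X2 q + ∑ x₁, ∑ x₂, ∑ y,
          q (x₁, x₂, y) * Real.log (margX2Y q (x₂, y) / (margX2 q x₂ * margY q y)) := by
    unfold cmiX1X2
    rw [← Finset.sum_add_distrib]
    refine Finset.sum_congr rfl fun x₁ _ => ?_
    rw [← Finset.sum_add_distrib]
    refine Finset.sum_congr rfl fun x₂ _ => ?_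
    rw [← Finset.sum_add_distrib]
    exact Finset.sum_congr rfl fun y _ => key x₁ x₂ y
  rw [this]
  have h2 : (∑ x₁, ∑ x₂, ∑ y,
      q (x₁, x₂, y) * Real.log (margX2Y q (x₂, y) / (margX2 q x₂ * margY q y))) = miX2 q := by
    rw [Finset.sum_comm]
    unfold miX2
    refine Finset.sum_congr rfl fun x₂ _ => ?_
    rw [Finset.sum_comm]
    refine Finset.sum_congr rfl fun y _ => ?_
    rw [← Finset.sum_mul]
    rfl
  rw [h2]; ring

lemma chain_rule_X2X1 (q : X₁ × X₂ × Y → ℝ) (hq : ∀ ω, 0 ≤ q ω) :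
    miJoint q = miX1 q + cmiX2X1 q := by
  have key : ∀ x₁ x₂ y,
      q (x₁, x₂, y) * Real.log (q (x₁, x₂, y) / (margX1X2 q (x₁, x₂) * margY q y))
      = q (x₁, x₂, y) * Real.log (margX1 q x₁ * q (x₁, x₂, y) /
          (margX1X2 q (x₁, x₂) * margX1Y q (x₁, y)))
        + q (x₁, x₂, y) * Real.log (margX1Y q (x₁, y) / (margX1 q x₁ * margY q y)) := by
    intro x₁ x₂ y
    rcases eq_or_lt_of_le (hq (x₁, x₂, y)) with h0 | hpos
    · simp [← h0]
    · have h12 : 0 < margX1X2 q (x₁, x₂) :=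
        lt_of_lt_of_le hpos (Finset.single_le_sum (fun i _ => hq (x₁, x₂, i)) (Finset.mem_univ y))
      have h1y : 0 < margX1Y q (x₁, y) :=
        lt_of_lt_of_le hpos (Finset.single_le_sum (fun i _ => hq (x₁, i, y)) (Finset.mem_univ x₂))
      have hx1 : 0 < margX1 q x₁ := by
        have h1 : q (x₁, x₂, y) ≤ ∑ y, q (x₁, x₂, y) :=
          Finset.single_le_sum (fun i _ => hq (x₁, x₂, i)) (Finset.mem_univ y)
        have h2 : (∑ y, q (x₁, x₂, y)) ≤ ∑ x₂, ∑ y, q (x₁, x₂, y) :=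
          Finset.single_le_sum (fun i _ => Finset.sum_nonneg fun j _ => hq (x₁, i, j))
            (Finset.mem_univ x₂)
        exact lt_of_lt_of_le hpos (h1.trans h2)
      have hy : 0 < margY q y := by
        have h1 : q (x₁, x₂, y) ≤ ∑ x₂, q (x₁, x₂, y) :=
          Finset.single_le_sum (fun i _ => hq (x₁, i, y)) (Finset.mem_univ x₂)
        have h2 : (∑ x₂, q (x₁, x₂, y)) ≤ ∑ x₁, ∑ x₂, q (x₁, x₂, y) :=
          Finset.single_le_sum (fun i _ => Finset.sum_nonneg fun j _ => hq (i, j, y))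
            (Finset.mem_univ x₁)
        exact lt_of_lt_of_le hpos (h1.trans h2)
      rw [← mul_add, ← Real.log_mul
        (div_pos (mul_pos hx1 hpos) (mul_pos h12 h1y)).ne'
        (div_pos h1y (mul_pos hx1 hy)).ne']
      congr 2
      field_simp
  unfold miJoint
  have : (∑ x₁, ∑ x₂, ∑ y,
      q (x₁, x₂, y) * Real.log (q (x₁, x₂, y) / (margX1X2 q (x₁, x₂) * margY q y)))
      = cmiX2X1 q + ∑ x₁, ∑ x₂, ∑ y,
          q (x₁, x₂, y) * Real.log (margX1Y q (x₁, y) / (margX1 q x₁ * margY q y)) := by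
    unfold cmiX2X1
    rw [← Finset.sum_add_distrib]
    refine Finset.sum_congr rfl fun x₁ _ => ?_
    rw [← Finset.sum_add_distrib]
    refine Finset.sum_congr rfl fun x₂ _ => ?_
    rw [← Finset.sum_add_distrib]
    exact Finset.sum_congr rfl fun y _ => key x₁ x₂ y
  rw [this]
  have h2 : (∑ x₁, ∑ x₂, ∑ y,
      q (x₁, x₂, y) * Real.log (margX1Y q (x₁, y) / (margX1 q x₁ * margY q y))) = miX1 q := by
    unfold miX1
    refine Finset.sum_congr rfl fun x₁ _ => ?_
    rw [Finset.sum_comm]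
    refine Finset.sum_congr rfl fun y _ => ?_
    rw [← Finset.sum_mul]
    rfl
  rw [h2]; ring

/-- **The PID bounds sum to the total mutual information:** if the minimum of the joint
mutual information over `Δ_p` is attained, then
`S̃I + ŨI(Y:X₁\X₂) + ŨI(Y:X₂\X₁) + C̃I = I_p(Y:(X₁,X₂))`, where
`ŨI(Y:X₁\X₂) = min_{q∈Δ_p} I_q(Y:X₁|X₂)`, `ŨI(Y:X₂\X₁) = min_{q∈Δ_p} I_q(Y:X₂|X₁)`,
`S̃I = max_{q∈Δ_p} CoI_q`, and `C̃I = I_p(Y:(X₁,X₂)) − min_{q∈Δ_p} I_q(Y:(X₁,X₂))`. -/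
theorem pid_bounds_sum_to_total
    [Nonempty X₁] [Nonempty X₂] [Nonempty Y]
    (p : X₁ × X₂ × Y → ℝ) (hp : IsPMF p)
    (hattained : ∃ qstar ∈ Delta p, ∀ q ∈ Delta p, miJoint qstar ≤ miJoint q) :
    sSup (coI '' Delta p) + sInf (cmiX1X2 '' Delta p) + sInf (cmiX2X1 '' Delta p) +
      (miJoint p - sInf (miJoint '' Delta p)) = miJoint p := by
  obtain ⟨qs, hqs, hmin⟩ := hattained
  set A := miX1 p with hA
  set B := miX2 p with hB
  set m := miJoint qs with hm
  -- key identities on Delta p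
  have hcmi12 : ∀ q ∈ Delta p, cmiX1X2 q = miJoint q - B := fun q hq => by
    have := chain_rule_X1X2 q hq.1.1
    rw [miX2_congr hq.2.2] at this
    linarith
  have hcmi21 : ∀ q ∈ Delta p, cmiX2X1 q = miJoint q - A := fun q hq => by
    have := chain_rule_X2X1 q hq.1.1
    rw [miX1_congr hq.2.1] at this
    linarith
  have hcoI : ∀ q ∈ Delta p, coI q = A + B - miJoint q := fun q hq => by
    unfold coI
    rw [miX1_congr hq.2.1, miX2_congr hq.2.2]
  have h1 : sInf (miJoint '' Delta p) = m := by
    refine IsLeast.csInf_eq ⟨⟨qs, hqs, rfl⟩, ?_⟩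
    rintro _ ⟨q, hq, rfl⟩
    exact hmin q hq
  have h2 : sInf (cmiX1X2 '' Delta p) = m - B := by
    refine IsLeast.csInf_eq ⟨⟨qs, hqs, hcmi12 qs hqs⟩, ?_⟩
    rintro _ ⟨q, hq, rfl⟩
    rw [hcmi12 q hq]
    linarith [hmin q hq]
  have h3 : sInf (cmiX2X1 '' Delta p) = m - A := by
    refine IsLeast.csInf_eq ⟨⟨qs, hqs, hcmi21 qs hqs⟩, ?_⟩
    rintro _ ⟨q, hq, rfl⟩
    rw [hcmi21 q hq]
    linarith [hmin q hq]
  have h4 : sSup (coI '' Delta p) = A + B - m := by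
    refine IsGreatest.csSup_eq ⟨⟨qs, hqs, hcoI qs hqs⟩, ?_⟩
    rintro _ ⟨q, hq, rfl⟩
    rw [hcoI q hq]
    linarith [hmin q hq]
  rw [h1, h2, h3, h4]
  ring
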